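/- Assume the Poincaré hypothesis with constant c and the embedding hypothesis. Let Ω ⊆ ℝⁿ be a bounded open set and K ⊆ Ω compact. Then C_{p,ϑ}(K) ≤ C · max{ cap_{p,ϑ}(K,Ω)^{1/p⁺}, cap_{p,ϑ}(K,Ω) }, where C = 2 max{ 1, c · diam(Ω) · c₁(Ω) } depends only on the Poincaré constant, the embedding constant and diam(Ω). -/

import Mathlib

open MeasureTheory Metric Set Filter ENNReal

noncomputable section

/-- The weighted variable exponent modular `ρ_{p,ϑ,A}(g) = ∫_A |g|^{p(x)} ϑ(x) dx`. -/
def rhoMod {n : ℕ} (p ϑ : EuclideanSpace ℝ (Fin n) → ℝ)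
    (A : Set (EuclideanSpace ℝ (Fin n))) (g : EuclideanSpace ℝ (Fin n) → ℝ) : ℝ≥0∞ :=
  ∫⁻ x in A, ENNReal.ofReal (|g x| ^ p x * ϑ x)

/-- Relative `(p(·),ϑ)`-capacity of a compact set `K` with respect to an open set `Ω`:
the infimum of `ρ_{p,ϑ,Ω}(‖Df‖)` over `C¹` functions with compact support contained in `Ω`
which are `≥ 1` on `K` (with `sInf ∅ = ∞`). -/
def relCapK {n : ℕ} (p ϑ : EuclideanSpace ℝ (Fin n) → ℝ)
    (K Ω : Set (EuclideanSpace ℝ (Fin n))) : ℝ≥0∞ :=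
  sInf ((fun f => rhoMod p ϑ Ω fun x => ‖fderiv ℝ f x‖) ''
    {f : EuclideanSpace ℝ (Fin n) → ℝ |
      ContDiff ℝ 1 f ∧ IsCompact (tsupport f) ∧ tsupport f ⊆ Ω ∧ ∀ x ∈ K, 1 ≤ f x})

/-- Relative capacity of an open subset `U ⊆ Ω`. -/
def relCapO {n : ℕ} (p ϑ : EuclideanSpace ℝ (Fin n) → ℝ)
    (U Ω : Set (EuclideanSpace ℝ (Fin n))) : ℝ≥0∞ :=
  ⨆ (K : Set (EuclideanSpace ℝ (Fin n))) (_ : IsCompact K ∧ K ⊆ U), relCapK p ϑ K Ω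

/-- Relative capacity of an arbitrary subset `A ⊆ Ω`. -/
def relCap {n : ℕ} (p ϑ : EuclideanSpace ℝ (Fin n) → ℝ)
    (A Ω : Set (EuclideanSpace ℝ (Fin n))) : ℝ≥0∞ :=
  ⨅ (U : Set (EuclideanSpace ℝ (Fin n))) (_ : IsOpen U ∧ A ⊆ U ∧ U ⊆ Ω), relCapO p ϑ U Ω

/-- The Sobolev `(p(·),ϑ)`-capacity of `A ⊆ ℝⁿ`. -/
def sobCap {n : ℕ} (p ϑ : EuclideanSpace ℝ (Fin n) → ℝ)
    (A : Set (EuclideanSpace ℝ (Fin n))) : ℝ≥0∞ :=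
  sInf ((fun f => ∫⁻ x, ENNReal.ofReal ((|f x| ^ p x + ‖fderiv ℝ f x‖ ^ p x) * ϑ x)) ''
    {f : EuclideanSpace ℝ (Fin n) → ℝ |
      ContDiff ℝ 1 f ∧ ∃ U, IsOpen U ∧ A ⊆ U ∧ ∀ x ∈ U, 1 ≤ f x})

/-- The weighted measure `μ_ϑ(A) = ∫_A ϑ(x) dx`. -/
def muW {n : ℕ} (ϑ : EuclideanSpace ℝ (Fin n) → ℝ)
    (A : Set (EuclideanSpace ℝ (Fin n))) : ℝ≥0∞ :=
  ∫⁻ x in A, ENNReal.ofReal (ϑ x)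

/-- `μ_ϑ` is doubling with constant `cd`. -/
def DoublingW {n : ℕ} (ϑ : EuclideanSpace ℝ (Fin n) → ℝ) (cd : ℝ) : Prop :=
  1 ≤ cd ∧ ∀ (x : EuclideanSpace ℝ (Fin n)) (r : ℝ), 0 < r →
    muW ϑ (ball x (2 * r)) ≤ ENNReal.ofReal cd * muW ϑ (ball x r)

/-- Poincaré hypothesis with constant `c` for the weight `ϑ`. -/
def PoincareHyp {n : ℕ} (ϑ : EuclideanSpace ℝ (Fin n) → ℝ) (c : ℝ) : Prop :=
  ∀ Ω : Set (EuclideanSpace ℝ (Fin n)), IsOpen Ω → Bornology.IsBounded Ω →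
    ∀ f : EuclideanSpace ℝ (Fin n) → ℝ, ContDiff ℝ 1 f → IsCompact (tsupport f) →
      tsupport f ⊆ Ω →
      ∫ x in Ω, |f x| * ϑ x ≤ c * diam Ω * ∫ x in Ω, ‖fderiv ℝ f x‖ * ϑ x

/-- Embedding hypothesis `L^{p(·)}_ϑ(Ω) ↪ L¹_ϑ(Ω)` with constants `c₁ Ω`. -/
def EmbeddingHyp {n : ℕ} (p ϑ : EuclideanSpace ℝ (Fin n) → ℝ)
    (c₁ : Set (EuclideanSpace ℝ (Fin n)) → ℝ) : Prop :=
  ∀ Ω : Set (EuclideanSpace ℝ (Fin n)), IsOpen Ω → Bornology.IsBounded Ω →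
    0 < c₁ Ω ∧ ∀ g : EuclideanSpace ℝ (Fin n) → ℝ, Measurable g → 1 ≤ rhoMod p ϑ Ω g →
      (∫⁻ x in Ω, ENNReal.ofReal (|g x| * ϑ x)) ≤ ENNReal.ofReal (c₁ Ω) * rhoMod p ϑ Ω g

/-- The Wiener sum `W^{sum}_{p,ϑ}(A,x₀)`. -/
def wienerSum {n : ℕ} (p ϑ : EuclideanSpace ℝ (Fin n) → ℝ)
    (A : Set (EuclideanSpace ℝ (Fin n))) (x₀ : EuclideanSpace ℝ (Fin n)) : ℝ≥0∞ :=
  ∑' i : ℕ,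
    (relCap p ϑ (A ∩ ball x₀ ((2 : ℝ) ^ (-(i : ℤ)))) (ball x₀ ((2 : ℝ) ^ (1 - (i : ℤ)))) /
        relCap p ϑ (ball x₀ ((2 : ℝ) ^ (-(i : ℤ)))) (ball x₀ ((2 : ℝ) ^ (1 - (i : ℤ))))) ^
      (1 / (p x₀ - 1))

/-- The Wiener type integral `W_{p,ϑ}(A,x₀)`. -/
def wienerInt {n : ℕ} (p ϑ : EuclideanSpace ℝ (Fin n) → ℝ)
    (A : Set (EuclideanSpace ℝ (Fin n))) (x₀ : EuclideanSpace ℝ (Fin n)) : ℝ≥0∞ :=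
  ∫⁻ r in Set.Ioo (0 : ℝ) 1,
    (relCap p ϑ (A ∩ ball x₀ r) (ball x₀ (2 * r)) /
        relCap p ϑ (ball x₀ r) (ball x₀ (2 * r))) ^ (1 / (p x₀ - 1)) / ENNReal.ofReal r

/-!
Let `f` compete for `cap_{p,ϑ}(K, Ω)` and `κ > 1`. Composing `κ f` with a `C¹`, `1`-Lipschitz
regularisation of the truncation `t ↦ min (max t 0) 1` gives `g` with `|g| ≤ 1`, `g ≥ 1` near `K`
and `‖Dg‖ ≤ κ ‖Df‖`, so `g` competes for `C_{p,ϑ}(K)`. As `|g| ≤ 1`, `∫ |g|^p ϑ ≤ ∫ |g| ϑ`, which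
the Poincaré inequality bounds by `c diam Ω ∫ ‖Dg‖ ϑ`. With `σ = ρ(‖Dg‖)`, the function
`‖Dg‖ / σ^{1/p(·)}` has modular exactly `1`, so the embedding gives
`∫ ‖Dg‖ ϑ ≤ c₁ max (σ^{1/p⁺}, σ)`. Altogether `C_{p,ϑ}(K) ≤ (1 + c diam Ω c₁) max (σ^{1/p⁺}, σ)`
with `σ ≤ κ^{p⁺} ρ(‖Df‖)`; let `κ → 1` and take the infimum over `f`.
-/

/-- A `C¹` regularisation of the truncation `projIcc 0 1` which is still `1`-Lipschitz. -/
def smoothTrunc (a t : ℝ) : ℝ := a⁻¹ * ∫ s in t - a..t, (projIcc (0 : ℝ) 1 zero_le_one s : ℝ)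

lemma continuous_coe_projIcc_zero_one :
    Continuous fun s : ℝ => (projIcc (0 : ℝ) 1 zero_le_one s : ℝ) :=
  continuous_subtype_val.comp continuous_projIcc

lemma hasDerivAt_smoothTrunc (a t : ℝ) :
    HasDerivAt (smoothTrunc a)
      (a⁻¹ * ((projIcc (0 : ℝ) 1 zero_le_one t : ℝ) - projIcc (0 : ℝ) 1 zero_le_one (t - a)))
      t := by
  have hG := fun u => (continuous_coe_projIcc_zero_one.integral_hasStrictDerivAt 0 u).hasDerivAt
  have hsub : smoothTrunc a = fun u =>
      a⁻¹ * ((∫ s in (0 : ℝ)..u, (projIcc (0 : ℝ) 1 zero_le_one s : ℝ)) -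
        ∫ s in (0 : ℝ)..u - a, (projIcc (0 : ℝ) 1 zero_le_one s : ℝ)) := by
    funext u
    rw [smoothTrunc, intervalIntegral.integral_interval_sub_left
      (continuous_coe_projIcc_zero_one.intervalIntegrable _ _)
      (continuous_coe_projIcc_zero_one.intervalIntegrable _ _)]
  rw [hsub]
  exact ((hG t).sub ((hG (t - a)).comp_sub_const t a)).const_mul a⁻¹

lemma contDiff_smoothTrunc (a : ℝ) : ContDiff ℝ 1 (smoothTrunc a) := by
  rw [contDiff_one_iff_deriv]
  refine ⟨fun t => (hasDerivAt_smoothTrunc a t).differentiableAt, ?_⟩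
  rw [funext fun t => (hasDerivAt_smoothTrunc a t).deriv]
  exact continuous_const.mul (continuous_coe_projIcc_zero_one.sub
    (continuous_coe_projIcc_zero_one.comp (continuous_sub_right a)))

lemma norm_deriv_smoothTrunc_le {a : ℝ} (ha : 0 < a) (t : ℝ) : ‖deriv (smoothTrunc a) t‖ ≤ 1 := by
  rw [(hasDerivAt_smoothTrunc a t).deriv, Real.norm_eq_abs, abs_mul, abs_inv, abs_of_pos ha,
    inv_mul_le_one₀ ha]
  simpa [abs_of_pos ha] using abs_projIcc_sub_projIcc (h := zero_le_one) (c := t) (d := t - a)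

lemma smoothTrunc_zero {a : ℝ} (ha : 0 ≤ a) : smoothTrunc a 0 = 0 := by
  rw [smoothTrunc, intervalIntegral.integral_congr (g := fun _ => (0 : ℝ)),
    intervalIntegral.integral_zero, mul_zero]
  intro s hs
  rw [uIcc_of_le (by linarith)] at hs
  simp [projIcc_of_le_left _ hs.2]

lemma abs_smoothTrunc_le_one {a : ℝ} (ha : 0 < a) (t : ℝ) : |smoothTrunc a t| ≤ 1 := by
  have h := intervalIntegral.norm_integral_le_of_norm_le_const (a := t - a) (b := t) (C := 1)
    (f := fun s => (projIcc (0 : ℝ) 1 zero_le_one s : ℝ)) fun s _ => by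
      rw [Real.norm_eq_abs, abs_of_nonneg (projIcc (0 : ℝ) 1 zero_le_one s).2.1]
      exact (projIcc (0 : ℝ) 1 zero_le_one s).2.2
  rw [_root_.sub_sub_cancel, abs_of_pos ha, one_mul, Real.norm_eq_abs] at h
  rw [smoothTrunc, abs_mul, abs_inv, abs_of_pos ha, inv_mul_le_one₀ ha]
  exact h

lemma smoothTrunc_eq_one {a : ℝ} (ha : 0 < a) {t : ℝ} (ht : 1 + a ≤ t) : smoothTrunc a t = 1 := by
  rw [smoothTrunc, intervalIntegral.integral_congr (g := fun _ => (1 : ℝ)),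
    intervalIntegral.integral_const, smul_eq_mul, mul_one, _root_.sub_sub_cancel,
    inv_mul_cancel₀ ha.ne']
  intro s hs
  rw [uIcc_of_le (by linarith)] at hs
  simp [projIcc_of_right_le _ (show 1 ≤ s by linarith [hs.1])]

lemma norm_fderiv_comp_le {E : Type*} [NormedAddCommGroup E] [NormedSpace ℝ E]
    {η : ℝ → ℝ} {f : E → ℝ} {x : E} (hη : Differentiable ℝ η) (hη' : ∀ t, ‖deriv η t‖ ≤ 1)
    (hf : DifferentiableAt ℝ f x) : ‖fderiv ℝ (η ∘ f) x‖ ≤ ‖fderiv ℝ f x‖ := by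
  rw [fderiv_comp x (hη _) hf]
  calc ‖(fderiv ℝ η (f x)).comp (fderiv ℝ f x)‖
      ≤ ‖fderiv ℝ η (f x)‖ * ‖fderiv ℝ f x‖ := ContinuousLinearMap.opNorm_comp_le _ _
    _ ≤ 1 * ‖fderiv ℝ f x‖ := by
        gcongr
        rw [← norm_deriv_eq_norm_fderiv]
        exact hη' _
    _ = ‖fderiv ℝ f x‖ := one_mul _

lemma exists_contDiff_truncation {E : Type*} [NormedAddCommGroup E] [NormedSpace ℝ E]
    {f : E → ℝ} (hf : ContDiff ℝ 1 f) {K : Set E} (hfK : ∀ x ∈ K, 1 ≤ f x) {κ : ℝ} (hκ : 1 < κ) :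
    ∃ g : E → ℝ, ContDiff ℝ 1 g ∧ tsupport g ⊆ tsupport f ∧ (∀ x, |g x| ≤ 1) ∧
      (∃ U, IsOpen U ∧ K ⊆ U ∧ ∀ x ∈ U, 1 ≤ g x) ∧
      ∀ x, ‖fderiv ℝ g x‖ ≤ κ * ‖fderiv ℝ f x‖ := by
  -- `smoothTrunc a = 1` on `[1 + a, ∞)` and `1 + a < κ ≤ κ * f` on `K`
  set a := (κ - 1) / 2
  have ha : 0 < a := by positivity
  have hκf : ContDiff ℝ 1 (fun x => κ * f x) := contDiff_const.mul hf
  refine ⟨smoothTrunc a ∘ fun x => κ * f x, (contDiff_smoothTrunc a).comp hκf, ?_,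
    fun x => abs_smoothTrunc_le_one ha _, ⟨{x | 1 + a < κ * f x}, ?_, ?_, ?_⟩, fun x => ?_⟩
  · exact (tsupport_comp_subset (smoothTrunc_zero ha.le) _).trans
      (tsupport_comp_subset (mul_zero κ) f)
  · exact isOpen_lt continuous_const hκf.continuous
  · intro x hx
    change 1 + a < κ * f x
    nlinarith [hfK x hx, show a = (κ - 1) / 2 from rfl]
  · intro x hx
    exact (smoothTrunc_eq_one ha (le_of_lt hx)).ge
  · have hfx : DifferentiableAt ℝ f x := hf.differentiable one_ne_zero x
    calc ‖fderiv ℝ (smoothTrunc a ∘ fun x => κ * f x) x‖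
        ≤ ‖fderiv ℝ (fun x => κ * f x) x‖ :=
          norm_fderiv_comp_le ((contDiff_smoothTrunc a).differentiable one_ne_zero)
            (norm_deriv_smoothTrunc_le ha) (hfx.const_mul κ)
      _ = κ * ‖fderiv ℝ f x‖ := by
          rw [fderiv_const_mul hfx, norm_smul, Real.norm_eq_abs, abs_of_pos (by linarith)]

lemma rpow_inv_le_max {σ q P : ℝ} (hσ : 0 ≤ σ) (hq : 1 ≤ q) (hqP : q ≤ P) :
    σ ^ q⁻¹ ≤ max (σ ^ (1 / P)) σ := by
  rcases le_total σ 1 with hσ1 | hσ1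
  · refine le_max_of_le_left (Real.rpow_le_rpow_of_exponent_ge' hσ hσ1
      (one_div_nonneg.2 (by linarith)) ?_)
    rw [one_div]
    exact inv_anti₀ (by linarith) hqP
  · exact le_max_of_le_right (Real.rpow_le_self_of_one_le hσ1 (inv_le_one_of_one_le₀ hq))

lemma ae_lt_of_lt_essInf_of_nonneg {α : Type*} [MeasurableSpace α] {μ : Measure α} {f : α → ℝ}
    {x : ℝ} (hx : 0 ≤ x) (h : x < essInf f μ) : ∀ᵐ y ∂μ, x < f y := by
  refine ae_lt_of_lt_essInf h ?_
  by_contra hf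
  rw [essInf, Real.liminf_of_not_isBoundedUnder hf] at h
  exact h.not_ge hx

section Capacity

open Topology

variable {n : ℕ} {p ϑ : EuclideanSpace ℝ (Fin n) → ℝ} {Ω K : Set (EuclideanSpace ℝ (Fin n))}
  {P c : ℝ} {c₁ : Set (EuclideanSpace ℝ (Fin n)) → ℝ}

lemma rhoMod_le_ofReal_rpow_mul {u v : EuclideanSpace ℝ (Fin n) → ℝ} {κ : ℝ} (hκ : 1 ≤ κ)
    (hϑ : ∀ x, 0 ≤ ϑ x) (h0p : ∀ᵐ x, 0 ≤ p x) (hpP : ∀ᵐ x, p x ≤ P)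
    (huv : ∀ x, |u x| ≤ κ * |v x|) :
    rhoMod p ϑ Ω u ≤ ENNReal.ofReal (κ ^ P) * rhoMod p ϑ Ω v := by
  rw [rhoMod, rhoMod, ← lintegral_const_mul' _ _ ENNReal.ofReal_ne_top]
  refine lintegral_mono_ae (ae_restrict_of_ae ?_)
  filter_upwards [h0p, hpP] with x h0 hpx
  rw [← ENNReal.ofReal_mul (by positivity)]
  refine ENNReal.ofReal_le_ofReal ?_
  have hϑx := hϑ x
  calc |u x| ^ p x * ϑ x ≤ (κ * |v x|) ^ p x * ϑ x :=
        mul_le_mul_of_nonneg_right (Real.rpow_le_rpow (abs_nonneg _) (huv x) h0) hϑx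
    _ = κ ^ p x * (|v x| ^ p x * ϑ x) := by
        rw [Real.mul_rpow (by linarith) (abs_nonneg _), mul_assoc]
    _ ≤ κ ^ P * (|v x| ^ p x * ϑ x) :=
        mul_le_mul_of_nonneg_right (Real.rpow_le_rpow_of_exponent_le hκ hpx) (by positivity)

lemma lintegral_abs_mul_eq_zero_of_rhoMod_eq_zero {G : EuclideanSpace ℝ (Fin n) → ℝ}
    (hp : Measurable p) (hϑ : AEMeasurable ϑ (volume.restrict Ω)) (hϑpos : ∀ x, 0 < ϑ x)
    (hp0 : ∀ᵐ x, p x ≠ 0) (hG : Measurable G) (h : rhoMod p ϑ Ω G = 0) :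
    ∫⁻ x in Ω, ENNReal.ofReal (|G x| * ϑ x) = 0 := by
  have hmeas : AEMeasurable (fun x => ENNReal.ofReal (|G x| ^ p x * ϑ x)) (volume.restrict Ω) :=
    ((hG.abs.pow hp).aemeasurable.mul hϑ).ennreal_ofReal
  rw [rhoMod, lintegral_eq_zero_iff' hmeas] at h
  refine (lintegral_congr_ae ?_).trans lintegral_zero
  filter_upwards [h, ae_restrict_of_ae hp0] with x hx hpx
  rw [Pi.zero_apply, ENNReal.ofReal_eq_zero] at hx
  have hGx : |G x| ^ p x = 0 :=
    le_antisymm (nonpos_of_mul_nonpos_left hx (hϑpos x)) (by positivity)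
  rw [(Real.rpow_eq_zero (abs_nonneg _) hpx).1 hGx, zero_mul, ENNReal.ofReal_zero]

lemma lintegral_abs_mul_le_max_rhoMod {c₁ : ℝ} {G : EuclideanSpace ℝ (Fin n) → ℝ}
    (hp : Measurable p) (hϑ : AEMeasurable ϑ (volume.restrict Ω)) (hϑpos : ∀ x, 0 < ϑ x)
    (h1p : ∀ᵐ x, 1 ≤ p x) (hpP : ∀ᵐ x, p x ≤ P) (hc₁ : 0 < c₁)
    (hE : ∀ g : EuclideanSpace ℝ (Fin n) → ℝ, Measurable g → 1 ≤ rhoMod p ϑ Ω g →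
      ∫⁻ x in Ω, ENNReal.ofReal (|g x| * ϑ x) ≤ ENNReal.ofReal c₁ * rhoMod p ϑ Ω g)
    (hG : Measurable G) :
    ∫⁻ x in Ω, ENNReal.ofReal (|G x| * ϑ x) ≤
      ENNReal.ofReal c₁ * max (rhoMod p ϑ Ω G ^ (1 / P)) (rhoMod p ϑ Ω G) := by
  set ρ := rhoMod p ϑ Ω G
  have hp0 : ∀ᵐ x, p x ≠ 0 := h1p.mono fun _ h => by positivity
  rcases eq_or_ne ρ ⊤ with hρtop | hρtop
  · rw [hρtop, max_eq_right le_top, ENNReal.mul_top (ENNReal.ofReal_pos.2 hc₁).ne']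
    exact le_top
  rcases eq_or_ne ρ 0 with hρ0 | hρ0
  · rw [lintegral_abs_mul_eq_zero_of_rhoMod_eq_zero hp hϑ hϑpos hp0 hG hρ0]
    exact zero_le
  set σ := ρ.toReal
  have hσ : 0 < σ := ENNReal.toReal_pos hρ0 hρtop
  set g : EuclideanSpace ℝ (Fin n) → ℝ := fun x => |G x| / σ ^ (p x)⁻¹
  have hg : Measurable g := hG.abs.div (measurable_const.pow hp.inv)
  have hρg : rhoMod p ϑ Ω g = 1 := by
    calc rhoMod p ϑ Ω g
        = ∫⁻ x in Ω, ENNReal.ofReal σ⁻¹ * ENNReal.ofReal (|G x| ^ p x * ϑ x) := by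
          refine lintegral_congr_ae (ae_restrict_of_ae ?_)
          filter_upwards [hp0] with x hpx
          rw [← ENNReal.ofReal_mul (by positivity), abs_of_nonneg (by positivity),
            Real.div_rpow (abs_nonneg _) (by positivity), Real.rpow_inv_rpow hσ.le hpx]
          ring_nf
      _ = ENNReal.ofReal σ⁻¹ * ρ := lintegral_const_mul' _ _ ENNReal.ofReal_ne_top
      _ = 1 := by
          rw [← ENNReal.ofReal_toReal hρtop, ← ENNReal.ofReal_mul (by positivity),
            inv_mul_cancel₀ hσ.ne', ENNReal.ofReal_one]
  set M := max (σ ^ (1 / P)) σ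
  have hM : ENNReal.ofReal M = max (ρ ^ (1 / P)) ρ := by
    rw [ENNReal.ofReal_max, ← ENNReal.ofReal_rpow_of_pos hσ, ENNReal.ofReal_toReal hρtop]
  calc ∫⁻ x in Ω, ENNReal.ofReal (|G x| * ϑ x)
      ≤ ∫⁻ x in Ω, ENNReal.ofReal M * ENNReal.ofReal (|g x| * ϑ x) := by
        refine lintegral_mono_ae (ae_restrict_of_ae ?_)
        filter_upwards [h1p, hpP] with x h1 hpx
        rw [← ENNReal.ofReal_mul (by positivity)]
        refine ENNReal.ofReal_le_ofReal ?_
        have hGg : |G x| = σ ^ (p x)⁻¹ * |g x| := by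
          rw [abs_of_nonneg (show 0 ≤ |G x| / σ ^ (p x)⁻¹ by positivity)]
          field_simp
        rw [hGg, mul_assoc]
        gcongr
        · exact mul_nonneg (abs_nonneg _) (hϑpos x).le
        · exact rpow_inv_le_max hσ.le h1 hpx
    _ = ENNReal.ofReal M * ∫⁻ x in Ω, ENNReal.ofReal (|g x| * ϑ x) :=
        lintegral_const_mul' _ _ ENNReal.ofReal_ne_top
    _ ≤ ENNReal.ofReal M * ENNReal.ofReal c₁ := by
        gcongr
        simpa [hρg] using hE g hg hρg.ge
    _ = ENNReal.ofReal c₁ * max (ρ ^ (1 / P)) ρ := by rw [hM, mul_comm]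

lemma PoincareHyp.lintegral_le (hP : PoincareHyp ϑ c) (hϑloc : LocallyIntegrable ϑ)
    (hϑ : ∀ x, 0 ≤ ϑ x) (hΩ : IsOpen Ω) (hΩb : Bornology.IsBounded Ω)
    {g : EuclideanSpace ℝ (Fin n) → ℝ} (hg : ContDiff ℝ 1 g) (hgc : HasCompactSupport g)
    (hgΩ : tsupport g ⊆ Ω) :
    ∫⁻ x in Ω, ENNReal.ofReal (|g x| * ϑ x) ≤
      ENNReal.ofReal (c * diam Ω) * ∫⁻ x in Ω, ENNReal.ofReal (‖fderiv ℝ g x‖ * ϑ x) := by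
  have hint₀ : Integrable (fun x => |g x| * ϑ x) :=
    hϑloc.integrable_smul_left_of_hasCompactSupport hg.continuous.abs hgc.abs
  have hint₁ : Integrable (fun x => ‖fderiv ℝ g x‖ * ϑ x) :=
    hϑloc.integrable_smul_left_of_hasCompactSupport (hg.continuous_fderiv one_ne_zero).norm
      (hgc.fderiv ℝ).norm
  rw [← ofReal_integral_eq_lintegral_ofReal hint₀.integrableOn
      (ae_of_all _ fun x => mul_nonneg (abs_nonneg _) (hϑ x)),
    ← ofReal_integral_eq_lintegral_ofReal hint₁.integrableOn
      (ae_of_all _ fun x => mul_nonneg (norm_nonneg _) (hϑ x)),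
    ← ENNReal.ofReal_mul' (setIntegral_nonneg hΩ.measurableSet fun x _ =>
      mul_nonneg (norm_nonneg _) (hϑ x))]
  exact ENNReal.ofReal_le_ofReal (hP Ω hΩ hΩb g hg hgc hgΩ)

lemma lintegral_rpow_add_rpow_mul_eq {g : EuclideanSpace ℝ (Fin n) → ℝ} (hp : Measurable p)
    (hϑ : AEMeasurable ϑ (volume.restrict Ω)) (hϑ0 : ∀ x, 0 ≤ ϑ x) (hp0 : ∀ᵐ x, p x ≠ 0)
    (hΩ : MeasurableSet Ω) (hg : Measurable g) (hgΩ : tsupport g ⊆ Ω) :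
    ∫⁻ x, ENNReal.ofReal ((|g x| ^ p x + ‖fderiv ℝ g x‖ ^ p x) * ϑ x) =
      (∫⁻ x in Ω, ENNReal.ofReal (|g x| ^ p x * ϑ x)) + rhoMod p ϑ Ω fun x => ‖fderiv ℝ g x‖ := by
  have hout : ∫⁻ x in Ωᶜ, ENNReal.ofReal ((|g x| ^ p x + ‖fderiv ℝ g x‖ ^ p x) * ϑ x) = 0 := by
    refine (setLIntegral_congr_fun_ae hΩ.compl ?_).trans lintegral_zero
    filter_upwards [hp0] with x hpx hx
    have hxg : x ∉ tsupport g := fun h => hx (hgΩ h)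
    have hDg : fderiv ℝ g x = 0 :=
      Function.notMem_support.1 fun h => hxg (support_fderiv_subset ℝ h)
    rw [image_eq_zero_of_notMem_tsupport hxg, hDg, abs_zero, norm_zero, Real.zero_rpow hpx,
      add_zero, zero_mul, ENNReal.ofReal_zero]
  have hmeas : AEMeasurable (fun x => ENNReal.ofReal (|g x| ^ p x * ϑ x)) (volume.restrict Ω) :=
    ((hg.abs.pow hp).aemeasurable.mul hϑ).ennreal_ofReal
  rw [← lintegral_add_compl _ hΩ, hout, add_zero, rhoMod, ← lintegral_add_left' hmeas]
  refine lintegral_congr fun x => ?_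
  rw [abs_norm, add_mul, ENNReal.ofReal_add (mul_nonneg (by positivity) (hϑ0 x))
    (mul_nonneg (by positivity) (hϑ0 x))]

lemma sobCap_le_of_abs_le_one (hp : Measurable p) (h1p : ∀ᵐ x, 1 ≤ p x)
    (hpP : ∀ᵐ x, p x ≤ P) (hϑpos : ∀ x, 0 < ϑ x) (hϑloc : LocallyIntegrable ϑ)
    (hP : PoincareHyp ϑ c) (hE : EmbeddingHyp p ϑ c₁) (hΩ : IsOpen Ω)
    (hΩb : Bornology.IsBounded Ω) {g : EuclideanSpace ℝ (Fin n) → ℝ} (hg : ContDiff ℝ 1 g)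
    (hgc : HasCompactSupport g) (hgΩ : tsupport g ⊆ Ω) (hg1 : ∀ x, |g x| ≤ 1)
    {U : Set (EuclideanSpace ℝ (Fin n))} (hU : IsOpen U) (hKU : K ⊆ U) (hgU : ∀ x ∈ U, 1 ≤ g x) :
    sobCap p ϑ K ≤ (ENNReal.ofReal (c * diam Ω * c₁ Ω) + 1) *
      max ((rhoMod p ϑ Ω fun x => ‖fderiv ℝ g x‖) ^ (1 / P))
        (rhoMod p ϑ Ω fun x => ‖fderiv ℝ g x‖) := by
  set ρ := rhoMod p ϑ Ω fun x => ‖fderiv ℝ g x‖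
  have hϑ : AEMeasurable ϑ (volume.restrict Ω) := hϑloc.aestronglyMeasurable.aemeasurable.restrict
  obtain ⟨hc₁, hEΩ⟩ := hE Ω hΩ hΩb
  have hgrad : ∫⁻ x in Ω, ENNReal.ofReal (‖fderiv ℝ g x‖ * ϑ x) ≤
      ENNReal.ofReal (c₁ Ω) * max (ρ ^ (1 / P)) ρ := by
    simpa only [abs_norm] using lintegral_abs_mul_le_max_rhoMod hp hϑ hϑpos h1p hpP hc₁ hEΩ
      (hg.continuous_fderiv one_ne_zero).norm.measurable
  have hpow : ∫⁻ x in Ω, ENNReal.ofReal (|g x| ^ p x * ϑ x) ≤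
      ∫⁻ x in Ω, ENNReal.ofReal (|g x| * ϑ x) := by
    refine lintegral_mono_ae (ae_restrict_of_ae ?_)
    filter_upwards [h1p] with x h1
    exact ENNReal.ofReal_le_ofReal (mul_le_mul_of_nonneg_right
      (Real.rpow_le_self_of_le_one (abs_nonneg _) (hg1 x) h1) (hϑpos x).le)
  calc sobCap p ϑ K
      ≤ ∫⁻ x, ENNReal.ofReal ((|g x| ^ p x + ‖fderiv ℝ g x‖ ^ p x) * ϑ x) :=
        sInf_le ⟨g, ⟨hg, U, hU, hKU, hgU⟩, rfl⟩
    _ = (∫⁻ x in Ω, ENNReal.ofReal (|g x| ^ p x * ϑ x)) + ρ :=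
        lintegral_rpow_add_rpow_mul_eq hp hϑ (fun x => (hϑpos x).le)
          (h1p.mono fun _ h => by positivity) hΩ.measurableSet hg.continuous.measurable hgΩ
    _ ≤ ENNReal.ofReal (c * diam Ω) * (ENNReal.ofReal (c₁ Ω) * max (ρ ^ (1 / P)) ρ) +
          max (ρ ^ (1 / P)) ρ := by
        gcongr
        · exact hpow.trans ((hP.lintegral_le hϑloc (fun x => (hϑpos x).le) hΩ hΩb hg hgc
            hgΩ).trans (mul_le_mul_right hgrad _))
        · exact le_max_right _ _
    _ = (ENNReal.ofReal (c * diam Ω * c₁ Ω) + 1) * max (ρ ^ (1 / P)) ρ := by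
        rw [ENNReal.ofReal_mul' hc₁.le]
        ring

lemma monotone_mul_max_rpow (C : ℝ≥0∞) (hP : 0 ≤ P) :
    Monotone fun s : ℝ≥0∞ => C * max (s ^ (1 / P)) s := fun _ _ h => by
  dsimp only
  gcongr

lemma continuous_mul_max_rpow {C : ℝ≥0∞} (hC : C ≠ ⊤) (P : ℝ) :
    Continuous fun s : ℝ≥0∞ => C * max (s ^ (1 / P)) s :=
  (ENNReal.continuous_const_mul hC).comp (ENNReal.continuous_rpow_const.max continuous_id)

lemma sobCap_le_of_admissible (hp : Measurable p) (h1p : ∀ᵐ x, 1 ≤ p x) (hpP : ∀ᵐ x, p x ≤ P)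
    (hP0 : 0 ≤ P) (hϑpos : ∀ x, 0 < ϑ x) (hϑloc : LocallyIntegrable ϑ) (hP : PoincareHyp ϑ c)
    (hE : EmbeddingHyp p ϑ c₁) (hΩ : IsOpen Ω) (hΩb : Bornology.IsBounded Ω)
    {f : EuclideanSpace ℝ (Fin n) → ℝ} (hf : ContDiff ℝ 1 f) (hfc : IsCompact (tsupport f))
    (hfΩ : tsupport f ⊆ Ω) (hfK : ∀ x ∈ K, 1 ≤ f x) :
    sobCap p ϑ K ≤ (ENNReal.ofReal (c * diam Ω * c₁ Ω) + 1) *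
      max ((rhoMod p ϑ Ω fun x => ‖fderiv ℝ f x‖) ^ (1 / P))
        (rhoMod p ϑ Ω fun x => ‖fderiv ℝ f x‖) := by
  set ρ := rhoMod p ϑ Ω fun x => ‖fderiv ℝ f x‖
  set Φ := fun s : ℝ≥0∞ => (ENNReal.ofReal (c * diam Ω * c₁ Ω) + 1) * max (s ^ (1 / P)) s
  have hscaled : ∀ κ ∈ Ioi (1 : ℝ), sobCap p ϑ K ≤ Φ (ENNReal.ofReal (κ ^ P) * ρ) := by
    intro κ hκ
    obtain ⟨g, hg, hgf, hg1, ⟨U, hU, hKU, hgU⟩, hDg⟩ := exists_contDiff_truncation hf hfK hκ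
    refine (sobCap_le_of_abs_le_one hp h1p hpP hϑpos hϑloc hP hE hΩ hΩb hg
      (hfc.of_isClosed_subset (isClosed_tsupport g) hgf) (hgf.trans hfΩ) hg1 hU hKU hgU).trans
      (monotone_mul_max_rpow _ hP0 ?_)
    exact rhoMod_le_ofReal_rpow_mul (le_of_lt hκ) (fun x => (hϑpos x).le)
      (h1p.mono fun _ h => zero_le_one.trans h) hpP fun x => by simpa only [abs_norm] using hDg x
  have hlim : Tendsto (fun κ : ℝ => ENNReal.ofReal (κ ^ P) * ρ) (𝓝[>] 1) (𝓝 ρ) := by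
    have h : Tendsto (fun κ : ℝ => ENNReal.ofReal (κ ^ P)) (𝓝 1) (𝓝 1) := by
      have h := (ENNReal.continuous_ofReal.tendsto _).comp
        (Real.continuousAt_rpow_const 1 P (Or.inl one_ne_zero)).tendsto
      rwa [Real.one_rpow, ENNReal.ofReal_one] at h
    simpa using (ENNReal.Tendsto.mul_const h (Or.inl one_ne_zero)).mono_left nhdsWithin_le_nhds
  exact ge_of_tendsto (((continuous_mul_max_rpow (by finiteness) P).tendsto ρ).comp hlim)
    (eventually_nhdsWithin_of_forall hscaled)

lemma sobCap_le_relCapK (hp : Measurable p) (h1p : ∀ᵐ x, 1 ≤ p x) (hpP : ∀ᵐ x, p x ≤ P)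
    (hP0 : 0 ≤ P) (hϑpos : ∀ x, 0 < ϑ x) (hϑloc : LocallyIntegrable ϑ) (hP : PoincareHyp ϑ c)
    (hE : EmbeddingHyp p ϑ c₁) (hΩ : IsOpen Ω) (hΩb : Bornology.IsBounded Ω) :
    sobCap p ϑ K ≤ (ENNReal.ofReal (c * diam Ω * c₁ Ω) + 1) *
      max (relCapK p ϑ K Ω ^ (1 / P)) (relCapK p ϑ K Ω) := by
  have hC : ENNReal.ofReal (c * diam Ω * c₁ Ω) + 1 ≠ ⊤ := by finiteness
  rw [relCapK, Monotone.map_sInf_of_continuousAt (f := fun s : ℝ≥0∞ =>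
      (ENNReal.ofReal (c * diam Ω * c₁ Ω) + 1) * max (s ^ (1 / P)) s)
    (continuous_mul_max_rpow hC P).continuousAt (monotone_mul_max_rpow _ hP0)
    (by simp)]
  refine le_sInf ?_
  rintro _ ⟨_, ⟨f, ⟨hf, hfc, hfΩ, hfK⟩, rfl⟩, rfl⟩
  exact sobCap_le_of_admissible hp h1p hpP hP0 hϑpos hϑloc hP hE hΩ hΩb hf hfc hfΩ hfK

end Capacity

theorem stmt12_general (n : ℕ) (p ϑ : EuclideanSpace ℝ (Fin n) → ℝ)
    (hp : Measurable p)
    (hpm : 1 < essInf p (volume : Measure (EuclideanSpace ℝ (Fin n))))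
    (hpb : Filter.IsBoundedUnder (· ≤ ·) (ae (volume : Measure (EuclideanSpace ℝ (Fin n)))) p)
    (hϑpos : ∀ x, 0 < ϑ x)
    (hϑloc : LocallyIntegrable ϑ (volume : Measure (EuclideanSpace ℝ (Fin n))))
    (c : ℝ) (hP : PoincareHyp ϑ c)
    (c₁ : Set (EuclideanSpace ℝ (Fin n)) → ℝ) (hE : EmbeddingHyp p ϑ c₁)
    (Ω K : Set (EuclideanSpace ℝ (Fin n))) (hΩ : IsOpen Ω) (hΩb : Bornology.IsBounded Ω) :
    sobCap p ϑ K ≤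
      ENNReal.ofReal (2 * max 1 (c * diam Ω * c₁ Ω)) *
        max (relCapK p ϑ K Ω ^ (1 / essSup p (volume : Measure (EuclideanSpace ℝ (Fin n)))))
          (relCapK p ϑ K Ω) := by
  have h1p : ∀ᵐ x, 1 ≤ p x :=
    (ae_lt_of_lt_essInf_of_nonneg zero_le_one hpm).mono fun _ h => h.le
  have hpP := ae_le_essSup hpb
  have hP0 : 0 ≤ essSup p (volume : Measure (EuclideanSpace ℝ (Fin n))) := by
    obtain ⟨x, h1, h2⟩ := (h1p.and hpP).exists
    linarith
  refine (sobCap_le_relCapK hp h1p hpP hP0 hϑpos hϑloc hP hE hΩ hΩb).trans ?_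
  gcongr
  have hmax : 0 ≤ max 1 (c * diam Ω * c₁ Ω) := zero_le_one.trans (le_max_left _ _)
  rw [two_mul, ENNReal.ofReal_add hmax hmax, ← ENNReal.ofReal_one]
  exact add_le_add (ENNReal.ofReal_le_ofReal (le_max_right _ _))
    (ENNReal.ofReal_le_ofReal (le_max_left _ _))

/-- The Sobolev capacity of a compact set is controlled by its relative capacity. -/
theorem stmt12 (n : ℕ) (hn : 1 ≤ n) (p ϑ : EuclideanSpace ℝ (Fin n) → ℝ)
    (hp : Measurable p)
    (hpm : 1 < essInf p (volume : Measure (EuclideanSpace ℝ (Fin n))))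
    (hpb : Filter.IsBoundedUnder (· ≤ ·) (ae (volume : Measure (EuclideanSpace ℝ (Fin n)))) p)
    (hϑpos : ∀ x, 0 < ϑ x)
    (hϑloc : LocallyIntegrable ϑ (volume : Measure (EuclideanSpace ℝ (Fin n))))
    (c : ℝ) (hc : 0 < c) (hP : PoincareHyp ϑ c)
    (c₁ : Set (EuclideanSpace ℝ (Fin n)) → ℝ) (hE : EmbeddingHyp p ϑ c₁)
    (Ω K : Set (EuclideanSpace ℝ (Fin n))) (hΩ : IsOpen Ω) (hΩb : Bornology.IsBounded Ω)
    (hK : IsCompact K) (hKΩ : K ⊆ Ω) :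
    sobCap p ϑ K ≤
      ENNReal.ofReal (2 * max 1 (c * diam Ω * c₁ Ω)) *
        max (relCapK p ϑ K Ω ^ (1 / essSup p (volume : Measure (EuclideanSpace ℝ (Fin n)))))
          (relCapK p ϑ K Ω) :=
  stmt12_general n p ϑ hp hpm hpb hϑpos hϑloc c hP c₁ hE Ω K hΩ hΩb

end
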